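/- arXiv:1506.04400 — 2 statements merged into one kernel-verified Lean document; each statement's English description precedes it below -/
import Mathlib

section
/- Let S¹ and S² be finite sets, each equipped with a decreasing filtration by subsets S¹ = S¹_0 ⊇ S¹_1 ⊇ … ⊇ S¹_k = ∅ and S² = S²_0 ⊇ S²_1 ⊇ … ⊇ S²_k = ∅. Let φ, φ' : S¹ → S² be bijections with φ(S¹_i) = S²_i and φ'(S¹_i) = S²_i for every i. Suppose that for each L ∈ S¹ we are given a vector v_L in the free ℤ-module ℤ^{S²} with standard basis (e_M)_{M ∈ S²}, such that whenever L ∈ S¹_i \ S¹_{i+1}: (a) v_L − ε_L · e_{φ(L)} lies in the ℤ-span of {e_M : M ∈ S²_{i+1}} for some sign ε_L ∈ {1, −1}, and (b) the coefficient of e_{φ'(L)} in v_L is nonzero. Then φ = φ'. -/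
/--
Combinatorial core of Lemma 2.4 of the paper: let `S₁`, `S₂` be finite sets with
decreasing filtrations `f₁ 0 ⊇ f₁ 1 ⊇ ⋯ ⊇ f₁ k = ∅` and `f₂ 0 ⊇ ⋯ ⊇ f₂ k = ∅`
starting at the whole set, and let `φ, φ' : S₁ ≃ S₂` be bijections compatible with
the filtrations.  Suppose that for each `L ∈ S₁` we are given a vector
`v L : S₂ → ℤ` (its coordinates in the standard basis of `ℤ^{S₂}`) such that whenever
`L ∈ f₁ i \ f₁ (i+1)`:
(a) `v L - ε • e_{φ L}` is supported on `f₂ (i+1)` for some sign `ε ∈ {1, -1}`, i.e.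
    `v L M = if M = φ L then ε else 0` for every `M ∉ f₂ (i+1)`; and
(b) the coefficient of `e_{φ' L}` in `v L` is nonzero.
Then `φ = φ'`.
-/
theorem bijection_determined_by_triangular_classes
    {S₁ S₂ : Type*} [Fintype S₁] [Fintype S₂] [DecidableEq S₂]
    (k : ℕ) (f₁ : ℕ → Set S₁) (f₂ : ℕ → Set S₂)
    (hf₁0 : f₁ 0 = Set.univ) (hf₂0 : f₂ 0 = Set.univ)
    (hf₁k : f₁ k = ∅) (hf₂k : f₂ k = ∅)
    (hf₁ : ∀ i, f₁ (i + 1) ⊆ f₁ i) (hf₂ : ∀ i, f₂ (i + 1) ⊆ f₂ i)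
    (φ φ' : S₁ ≃ S₂)
    (hφ : ∀ i, ⇑φ '' f₁ i = f₂ i) (hφ' : ∀ i, ⇑φ' '' f₁ i = f₂ i)
    (v : S₁ → S₂ → ℤ)
    (ha : ∀ i, ∀ L ∈ f₁ i, L ∉ f₁ (i + 1) →
      ∃ ε : ℤ, (ε = 1 ∨ ε = -1) ∧
        ∀ M ∉ f₂ (i + 1), v L M = if M = φ L then ε else 0)
    (hb : ∀ i, ∀ L ∈ f₁ i, L ∉ f₁ (i + 1) → v L (φ' L) ≠ 0) :
    φ = φ' := by
  apply Equiv.ext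
  intro L
  classical
  have hex : ∃ n, L ∉ f₁ n := ⟨k, by simp [hf₁k]⟩
  set n := Nat.find hex with hn
  have hnot : L ∉ f₁ n := Nat.find_spec hex
  have hnpos : n ≠ 0 := by
    intro h
    exact hnot (by rw [h, hf₁0]; trivial)
  obtain ⟨i, hni⟩ := Nat.exists_eq_succ_of_ne_zero hnpos
  rw [hni] at hnot
  have hin : L ∈ f₁ i := by
    by_contra h
    have : Nat.find hex ≤ i := Nat.find_le h
    omega
  -- φ' L ∉ f₂ (i+1)
  have h1 : φ' L ∉ f₂ (i + 1) := by
    intro hmem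
    rw [← hφ' (i + 1)] at hmem
    obtain ⟨L', hL', hLL⟩ := hmem
    exact hnot (φ'.injective hLL ▸ hL')
  obtain ⟨ε, hε, hva⟩ := ha i L hin hnot
  have := hb i L hin hnot
  rw [hva (φ' L) h1] at this
  by_contra hne
  simp [Ne.symm hne] at this
end

section
/- Fix n ≥ 2. For natural numbers a ≤ b ≤ n − 1, let r_{a,b} ∈ Equiv.Perm (Fin n) denote the interval reversal: the permutation sending x to a + b − x when a ≤ x ≤ b and fixing all other points. Let 0 ≤ i ≤ j ≤ n − 2 and 0 ≤ k ≤ l ≤ n − 2 with i ≤ k and l ≤ j (nested intervals). Then r_{i, j+1} ∘ r_{k, l+1} ∘ r_{i, j+1} = r_{i+j−l, i+j−k+1} in Equiv.Perm (Fin n). -/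
/-- The interval reversal `r_{a,b} ∈ Perm (Fin n)`: it sends `x` to `a + b - x` when
`a ≤ x ≤ b` and fixes all other points. -/
def intervalReversal (n a b : ℕ) (hb : b < n) : Equiv.Perm (Fin n) :=
  Function.Involutive.toPerm
    (fun x => if h : a ≤ (x : ℕ) ∧ (x : ℕ) ≤ b then ⟨a + b - (x : ℕ), by omega⟩ else x)
    (by
      intro x
      by_cases h : a ≤ (x : ℕ) ∧ (x : ℕ) ≤ b
      · have h2 : a ≤ a + b - (x : ℕ) ∧ a + b - (x : ℕ) ≤ b := by omega
        simp only [dif_pos h]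
        rw [dif_pos h2]
        ext
        simp only
        omega
      · simp only [dif_neg h])

lemma intervalReversal_val (n a b : ℕ) (hb : b < n) (x : Fin n) :
    ((intervalReversal n a b hb) x : ℕ) =
      if a ≤ (x : ℕ) ∧ (x : ℕ) ≤ b then a + b - (x : ℕ) else (x : ℕ) := by
  simp only [intervalReversal, Function.Involutive.toPerm, Equiv.coe_fn_mk]
  split_ifs <;> simp_all

/--
For nested intervals `{k, …, l} ⊆ {i, …, j}` of vertices of the type `A_{n-1}` Dynkin
diagram, conjugating the interval reversal `r_{k, l+1}` by the interval reversal
`r_{i, j+1}` gives the interval reversal `r_{i+j-l, i+j-k+1}`: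
`r_{i,j+1} ∘ r_{k,l+1} ∘ r_{i,j+1} = r_{i+j-l, i+j-k+1}` in `Perm (Fin n)`.
-/
theorem intervalReversal_conj (n : ℕ) (hn : 2 ≤ n) (i j k l : ℕ)
    (hij : i ≤ j) (hj : j ≤ n - 2) (hkl : k ≤ l) (hl : l ≤ n - 2)
    (hik : i ≤ k) (hlj : l ≤ j) :
    intervalReversal n i (j + 1) (by omega) *
        intervalReversal n k (l + 1) (by omega) *
        intervalReversal n i (j + 1) (by omega) =
      intervalReversal n (i + j - l) (i + j - k + 1) (by omega) := by
  ext x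
  simp only [Equiv.Perm.mul_apply, intervalReversal_val]
  have := x.isLt
  split_ifs <;> omega
end
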